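/- arXiv:1802.06353 — 2 statements merged into one kernel-verified Lean document; each statement's English description precedes it below -/
import Mathlib

section
/- Let a < b, k : [a,b] → ℝ continuous with k ≥ k₀ > 0, and let g : [a,b] × ℝ → ℝ be such that s ↦ g(x,s) is nondecreasing for every x. Define the operator A on H¹(a,b) (restricted to zero-mean pairs) by the bilinear pairing ⟨A(u,v),(ψ,φ)⟩ = ∫ k u' ψ' + ∫ k v' φ' + ∫ (g(x, v - u) )(φ - ψ). Then A is monotone: ⟨A(u₁,v₁) - A(u₂,v₂), (u₁-u₂, v₁-v₂)⟩ ≥ 0. -/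
open MeasureTheory intervalIntegral

/-- Monotonicity of the operator `A` from the proof of Proposition 2.1:
`⟨A(u₁,v₁) - A(u₂,v₂), (u₁-u₂, v₁-v₂)⟩ ≥ 0`, where the pairing is
`∫ k (u₁'-u₂')² + ∫ k (v₁'-v₂')² + ∫ (g(x, v₁-u₁) - g(x, v₂-u₂)) ((v₁-v₂)-(u₁-u₂))`. -/
theorem stmt_3 (a b k₀ : ℝ) (hab : a < b) (k : ℝ → ℝ)
    (hkcont : ContinuousOn k (Set.Icc a b))
    (hk₀ : 0 < k₀) (hk : ∀ x ∈ Set.Icc a b, k₀ ≤ k x)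
    (g : ℝ → ℝ → ℝ) (hg : ∀ x, Monotone (g x))
    (u₁ v₁ u₂ v₂ : ℝ → ℝ)
    (hint₁ : IntervalIntegrable (fun x => k x * (deriv u₁ x - deriv u₂ x) ^ 2) volume a b)
    (hint₂ : IntervalIntegrable (fun x => k x * (deriv v₁ x - deriv v₂ x) ^ 2) volume a b)
    (hint₃ : IntervalIntegrable (fun x =>
      (g x (v₁ x - u₁ x) - g x (v₂ x - u₂ x)) * ((v₁ x - v₂ x) - (u₁ x - u₂ x)))
      volume a b) :
    0 ≤ (∫ x in a..b, k x * (deriv u₁ x - deriv u₂ x) ^ 2)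
        + (∫ x in a..b, k x * (deriv v₁ x - deriv v₂ x) ^ 2)
        + ∫ x in a..b,
            (g x (v₁ x - u₁ x) - g x (v₂ x - u₂ x)) * ((v₁ x - v₂ x) - (u₁ x - u₂ x)) := by
  have hab' : a ≤ b := hab.le
  have hknn : ∀ x ∈ Set.Icc a b, 0 ≤ k x := fun x hx => le_trans hk₀.le (hk x hx)
  have h1 : 0 ≤ ∫ x in a..b, k x * (deriv u₁ x - deriv u₂ x) ^ 2 :=
    intervalIntegral.integral_nonneg hab' fun x hx =>
      mul_nonneg (hknn x hx) (sq_nonneg _)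
  have h2 : 0 ≤ ∫ x in a..b, k x * (deriv v₁ x - deriv v₂ x) ^ 2 :=
    intervalIntegral.integral_nonneg hab' fun x hx =>
      mul_nonneg (hknn x hx) (sq_nonneg _)
  have h3 : 0 ≤ ∫ x in a..b,
      (g x (v₁ x - u₁ x) - g x (v₂ x - u₂ x)) * ((v₁ x - v₂ x) - (u₁ x - u₂ x)) := by
    apply intervalIntegral.integral_nonneg hab'
    intro x _
    rcases le_total (v₁ x - u₁ x) (v₂ x - u₂ x) with h' | h'
    · have hg' : g x (v₁ x - u₁ x) - g x (v₂ x - u₂ x) ≤ 0 :=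
        sub_nonpos.mpr (hg x h')
      have : (v₁ x - v₂ x) - (u₁ x - u₂ x) ≤ 0 := by linarith
      nlinarith
    · have hg' : 0 ≤ g x (v₁ x - u₁ x) - g x (v₂ x - u₂ x) :=
        sub_nonneg.mpr (hg x h')
      have : 0 ≤ (v₁ x - v₂ x) - (u₁ x - u₂ x) := by linarith
      exact mul_nonneg hg' this
  linarith
end

section
/- Let a < b and let κ, σ : [a,b] → ℝ be measurable with κ ≥ κ₀ > 0 and σ ≥ σ₀ > 0, and let g satisfy g ≥ g₀ > 0. Then the bilinear form G((u,v),(ψ,φ)) = ∫ κ u'ψ' + ∫ σ v'φ' + ∫ g (u−v)(ψ−φ) is coercive on the subspace of H¹(a,b) × H¹(a,b) of pairs (u,v) with ∫ u = 0: there exists c > 0 with G((u,v),(u,v)) ≥ c(‖u‖²_{H¹} + ‖v‖²_{H¹}). -/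
open Set MeasureTheory intervalIntegral



lemma exists_zero_of_integral_zero (a b : ℝ) (hab : a < b) (u : ℝ → ℝ)
    (hu : ContinuousOn u (Icc a b)) (hmean : (∫ x in a..b, u x) = 0) :
    ∃ ξ ∈ Icc a b, u ξ = 0 := by
  by_contra h
  push_neg at h
  have hint : IntervalIntegrable u volume a b :=
    ContinuousOn.intervalIntegrable (by rwa [uIcc_of_le hab.le])
  rcases lt_or_gt_of_ne (h a (left_mem_Icc.2 hab.le)) with hpos | hneg
  · have hall : ∀ x ∈ Icc a b, u x < 0 := by
      intro x hx
      rcases lt_or_gt_of_ne (h x hx) with h1 | h1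
      · exact h1
      · exfalso
        have hsub : uIcc a x ⊆ Icc a b := by
          rw [uIcc_of_le hx.1]; exact Icc_subset_Icc le_rfl hx.2
        have := intermediate_value_uIcc (hu.mono hsub)
        have h0 : (0:ℝ) ∈ uIcc (u a) (u x) := mem_uIcc.2 (Or.inl ⟨hpos.le, h1.le⟩)
        obtain ⟨y, hy, hy0⟩ := this h0
        exact h y (hsub hy) hy0
    have : (∫ x in a..b, u x) < 0 := by
      have := intervalIntegral.intervalIntegral_pos_of_pos_on (f := fun x => -u x)
        hint.neg (fun x hx => neg_pos.2 (hall x ⟨hx.1.le, hx.2.le⟩)) hab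
      rw [intervalIntegral.integral_neg] at this
      linarith
    rw [hmean] at this; exact lt_irrefl _ this
  · have hall : ∀ x ∈ Icc a b, 0 < u x := by
      intro x hx
      rcases lt_or_gt_of_ne (h x hx) with h1 | h1
      · exfalso
        have hsub : uIcc a x ⊆ Icc a b := by
          rw [uIcc_of_le hx.1]; exact Icc_subset_Icc le_rfl hx.2
        have := intermediate_value_uIcc (hu.mono hsub)
        have h0 : (0:ℝ) ∈ uIcc (u a) (u x) := mem_uIcc.2 (Or.inr ⟨h1.le, hneg.le⟩)
        obtain ⟨y, hy, hy0⟩ := this h0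
        exact h y (hsub hy) hy0
      · exact h1
    have : 0 < (∫ x in a..b, u x) :=
      intervalIntegral.intervalIntegral_pos_of_pos_on hint
        (fun x hx => hall x ⟨hx.1.le, hx.2.le⟩) hab
    rw [hmean] at this; exact lt_irrefl _ this


lemma poincare_aux (a b : ℝ) (hab : a < b) (u : ℝ → ℝ)
    (hu : ContinuousOn u (Icc a b)) (hud : DifferentiableOn ℝ u (Icc a b))
    (hu2 : IntervalIntegrable (fun x => (u x) ^ 2) volume a b)
    (hu'2 : IntervalIntegrable (fun x => (deriv u x) ^ 2) volume a b)
    (hzero : ∃ ξ ∈ Icc a b, u ξ = 0) :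
    (∫ x in a..b, (u x) ^ 2) ≤ 4 * (b - a) ^ 2 * ∫ x in a..b, (deriv u x) ^ 2 := by
  obtain ⟨ξ, hξ, huξ⟩ := hzero
  have hba : 0 < b - a := by linarith
  set t : ℝ := 2 * (b - a) with ht_def
  have ht : 0 < t := by rw [ht_def]; linarith
  set h : ℝ → ℝ := fun y => (u y) ^ 2 / t + t * (deriv u y) ^ 2 with hh_def
  set f : ℝ → ℝ := fun y => 2 * u y * deriv u y with hf_def
  have hh_int : IntervalIntegrable h volume a b :=
    (hu2.div_const t).add (hu'2.const_mul t)
  have hh_nonneg : ∀ y, 0 ≤ h y := by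
    intro y
    simp only [hh_def]
    have := sq_nonneg (u y); have := sq_nonneg (deriv u y); positivity
  have hfh : ∀ y, f y ≤ h y ∧ -f y ≤ h y := by
    intro y
    simp only [hh_def, hf_def]
    have h1 := sq_nonneg (u y - t * deriv u y)
    have h2 := sq_nonneg (u y + t * deriv u y)
    constructor
    · rw [div_add' _ _ _ ht.ne', le_div_iff₀ ht]; nlinarith
    · rw [div_add' _ _ _ ht.ne', le_div_iff₀ ht]; nlinarith
  have humeas : AEMeasurable u (volume.restrict (Icc a b)) :=
    hu.aemeasurable measurableSet_Icc
  have hfmeas : ∀ c d : ℝ, uIcc c d ⊆ Icc a b →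
      IntervalIntegrable f volume c d := by
    intro c d hsub
    have hfae : AEMeasurable f (volume.restrict (uIoc c d)) := by
      have : AEMeasurable u (volume.restrict (uIoc c d)) :=
        humeas.mono_measure (Measure.restrict_mono
          (fun x hx => hsub (uIoc_subset_uIcc hx)) le_rfl)
      exact (aemeasurable_const.mul this).mul (measurable_deriv u).aemeasurable
    have hhint : IntervalIntegrable h volume c d := by
      refine hh_int.mono_set ?_
      calc uIcc c d ⊆ Icc a b := hsub
        _ = uIcc a b := (uIcc_of_le hab.le).symm
    refine hhint.mono_fun hfae.aestronglyMeasurable ?_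
    filter_upwards with y
    rw [Real.norm_eq_abs, Real.norm_eq_abs, abs_le, abs_of_nonneg (hh_nonneg y)]
    exact ⟨by linarith [(hfh y).2], (hfh y).1⟩
  have key : ∀ x ∈ Icc a b, (u x) ^ 2 ≤ ∫ y in a..b, h y := by
    intro x hx
    have hderiv : ∀ y ∈ Ioo a b, HasDerivAt (fun z => (u z) ^ 2) (f y) y := by
      intro y hy
      have hd : DifferentiableAt ℝ u y :=
        (hud y (Ioo_subset_Icc_self hy)).differentiableAt (Icc_mem_nhds hy.1 hy.2)
      have h2 : HasDerivAt (fun z => (u z) ^ 2) (((2:ℕ):ℝ) * u y ^ (2 - 1) * deriv u y) y :=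
        hd.hasDerivAt.pow 2
      convert h2 using 1
      simp only [hf_def, Nat.cast_ofNat, pow_one]
      ring
    rcases le_total ξ x with hle | hle
    · have hsub : uIcc ξ x ⊆ Icc a b := by
        rw [uIcc_of_le hle]; exact Icc_subset_Icc hξ.1 hx.2
      have hftc : (∫ y in ξ..x, f y) = (u x) ^ 2 - (u ξ) ^ 2 := by
        apply intervalIntegral.integral_eq_sub_of_hasDerivAt_of_le hle
        · exact (hu.mono (Icc_subset_Icc hξ.1 hx.2)).pow 2
        · intro y hy
          exact hderiv y ⟨lt_of_le_of_lt hξ.1 hy.1, lt_of_lt_of_le hy.2 hx.2⟩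
        · exact hfmeas ξ x hsub
      have h1 : (∫ y in ξ..x, f y) ≤ ∫ y in ξ..x, h y := by
        apply intervalIntegral.integral_mono_on hle (hfmeas ξ x hsub)
          (hh_int.mono_set (by rw [uIcc_of_le hab.le]; exact hsub))
        intro y _; exact (hfh y).1
      have h2 : (∫ y in ξ..x, h y) ≤ ∫ y in a..b, h y := by
        apply intervalIntegral.integral_mono_interval hξ.1 hle hx.2
        · filter_upwards with y; simpa using hh_nonneg y
        · exact hh_int
      rw [huξ] at hftc
      simp only [ne_eq, OfNat.ofNat_ne_zero, not_false_eq_true, zero_pow, sub_zero] at hftc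
      linarith
    · have hsub : uIcc x ξ ⊆ Icc a b := by
        rw [uIcc_of_le hle]; exact Icc_subset_Icc hx.1 hξ.2
      have hftc : (∫ y in x..ξ, f y) = (u ξ) ^ 2 - (u x) ^ 2 := by
        apply intervalIntegral.integral_eq_sub_of_hasDerivAt_of_le hle
        · exact (hu.mono (Icc_subset_Icc hx.1 hξ.2)).pow 2
        · intro y hy
          exact hderiv y ⟨lt_of_le_of_lt hx.1 hy.1, lt_of_lt_of_le hy.2 hξ.2⟩
        · exact hfmeas x ξ hsub
      have h1 : (∫ y in x..ξ, -f y) ≤ ∫ y in x..ξ, h y := by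
        apply intervalIntegral.integral_mono_on hle (hfmeas x ξ hsub).neg
          (hh_int.mono_set (by rw [uIcc_of_le hab.le]; exact hsub))
        intro y _; exact (hfh y).2
      have h2 : (∫ y in x..ξ, h y) ≤ ∫ y in a..b, h y := by
        apply intervalIntegral.integral_mono_interval hx.1 hle hξ.2
        · filter_upwards with y; simpa using hh_nonneg y
        · exact hh_int
      rw [huξ] at hftc
      rw [intervalIntegral.integral_neg] at h1
      simp only [ne_eq, OfNat.ofNat_ne_zero, not_false_eq_true, zero_pow, zero_sub] at hftc
      linarith
  have hM : (∫ x in a..b, (u x) ^ 2) ≤ (b - a) * ∫ y in a..b, h y := by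
    have := intervalIntegral.integral_mono_on hab.le hu2
      (_root_.intervalIntegrable_const (c := ∫ y in a..b, h y)) key
    rwa [intervalIntegral.integral_const, smul_eq_mul] at this
  have hsplit : (∫ y in a..b, h y)
      = (∫ x in a..b, (u x) ^ 2) / t + t * ∫ x in a..b, (deriv u x) ^ 2 := by
    simp only [hh_def]
    rw [intervalIntegral.integral_add (hu2.div_const t) (hu'2.const_mul t),
      intervalIntegral.integral_div, intervalIntegral.integral_const_mul]
  rw [hsplit] at hM
  set A := ∫ x in a..b, (u x) ^ 2
  set B := ∫ x in a..b, (deriv u x) ^ 2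
  have e : (b - a) * (A / t + t * B) = A / 2 + 2 * (b - a) ^ 2 * B := by
    rw [ht_def]; field_simp
  rw [e] at hM
  linarith


/-- Coercivity of the linearized bilinear form (proof of Proposition 2.2):
`G((u,v),(u,v)) = ∫ κ u'² + ∫ σ v'² + ∫ g (u-v)²` dominates a multiple of the
`H¹ × H¹` norm on pairs with `∫ u = 0`. -/
theorem stmt_16 (a b κ₀ σ₀ g₀ : ℝ) (hab : a < b)
    (hκ₀ : 0 < κ₀) (hσ₀ : 0 < σ₀) (hg₀ : 0 < g₀)
    (κ σ g : ℝ → ℝ)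
    (hκmeas : Measurable κ) (hσmeas : Measurable σ) (hgmeas : Measurable g)
    (hκ : ∀ x ∈ Icc a b, κ₀ ≤ κ x) (hσ : ∀ x ∈ Icc a b, σ₀ ≤ σ x)
    (hg : ∀ x ∈ Icc a b, g₀ ≤ g x) :
    ∃ c > 0, ∀ u v : ℝ → ℝ,
      ContinuousOn u (Icc a b) → ContinuousOn v (Icc a b) →
      DifferentiableOn ℝ u (Icc a b) → DifferentiableOn ℝ v (Icc a b) →
      IntervalIntegrable (fun x => (u x) ^ 2 + (deriv u x) ^ 2) volume a b →
      IntervalIntegrable (fun x => (v x) ^ 2 + (deriv v x) ^ 2) volume a b →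
      IntervalIntegrable (fun x => κ x * (deriv u x) ^ 2) volume a b →
      IntervalIntegrable (fun x => σ x * (deriv v x) ^ 2) volume a b →
      IntervalIntegrable (fun x => g x * (u x - v x) ^ 2) volume a b →
      (∫ x in a..b, u x) = 0 →
      c * ((∫ x in a..b, (u x) ^ 2 + (deriv u x) ^ 2)
            + ∫ x in a..b, (v x) ^ 2 + (deriv v x) ^ 2)
        ≤ (∫ x in a..b, κ x * (deriv u x) ^ 2)
            + (∫ x in a..b, σ x * (deriv v x) ^ 2)
            + ∫ x in a..b, g x * (u x - v x) ^ 2 := by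
  have hba : 0 < b - a := by linarith
  set P : ℝ := 4 * (b - a) ^ 2 with hP_def
  have hP : 0 < P := by positivity
  have hP1 : 0 < 3 * P + 1 := by linarith
  refine ⟨min (min (κ₀ / (3 * P + 1)) σ₀) (g₀ / 2), by positivity, ?_⟩
  set c : ℝ := min (min (κ₀ / (3 * P + 1)) σ₀) (g₀ / 2) with hc_def
  have hc0 : 0 ≤ c := by positivity
  have hc1 : c * (3 * P + 1) ≤ κ₀ := by
    have : c ≤ κ₀ / (3 * P + 1) := le_trans (min_le_left _ _) (min_le_left _ _)
    calc c * (3 * P + 1) ≤ κ₀ / (3 * P + 1) * (3 * P + 1) :=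
          mul_le_mul_of_nonneg_right this hP1.le
      _ = κ₀ := by field_simp
  have hc2 : c ≤ σ₀ := le_trans (min_le_left _ _) (min_le_right _ _)
  have hc3 : 2 * c ≤ g₀ := by
    have : c ≤ g₀ / 2 := min_le_right _ _
    linarith
  intro u v hu hv hud hvd hEu hEv hκint hσint hgint hmean
  have huIcc : uIcc a b = Icc a b := uIcc_of_le hab.le
  have hu2 : IntervalIntegrable (fun x => (u x) ^ 2) volume a b :=
    ContinuousOn.intervalIntegrable (by rw [huIcc]; exact hu.pow 2)
  have hv2 : IntervalIntegrable (fun x => (v x) ^ 2) volume a b :=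
    ContinuousOn.intervalIntegrable (by rw [huIcc]; exact hv.pow 2)
  have huv2 : IntervalIntegrable (fun x => (u x - v x) ^ 2) volume a b :=
    ContinuousOn.intervalIntegrable (by rw [huIcc]; exact (hu.sub hv).pow 2)
  have hu'2 : IntervalIntegrable (fun x => (deriv u x) ^ 2) volume a b := by
    have := hEu.sub hu2
    have heq : (fun x => ((u x) ^ 2 + (deriv u x) ^ 2) - (u x) ^ 2)
        = fun x => (deriv u x) ^ 2 := by funext x; ring
    rwa [heq] at this
  have hv'2 : IntervalIntegrable (fun x => (deriv v x) ^ 2) volume a b := by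
    have := hEv.sub hv2
    have heq : (fun x => ((v x) ^ 2 + (deriv v x) ^ 2) - (v x) ^ 2)
        = fun x => (deriv v x) ^ 2 := by funext x; ring
    rwa [heq] at this
  -- names for the integrals
  set Iu2 := ∫ x in a..b, (u x) ^ 2 with hIu2_def
  set Iu'2 := ∫ x in a..b, (deriv u x) ^ 2 with hIu'2_def
  set Iv2 := ∫ x in a..b, (v x) ^ 2 with hIv2_def
  set Iv'2 := ∫ x in a..b, (deriv v x) ^ 2 with hIv'2_def
  set Iuv := ∫ x in a..b, (u x - v x) ^ 2 with hIuv_def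
  -- nonnegativity
  have hIu'_nn : 0 ≤ Iu'2 :=
    intervalIntegral.integral_nonneg hab.le (fun x _ => sq_nonneg _)
  have hIv'_nn : 0 ≤ Iv'2 :=
    intervalIntegral.integral_nonneg hab.le (fun x _ => sq_nonneg _)
  have hIuv_nn : 0 ≤ Iuv :=
    intervalIntegral.integral_nonneg hab.le (fun x _ => sq_nonneg _)
  -- Poincaré
  have hpoin : Iu2 ≤ P * Iu'2 :=
    poincare_aux a b hab u hu hud hu2 hu'2
      (exists_zero_of_integral_zero a b hab u hu hmean)
  -- v² ≤ 2(u-v)² + 2u²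
  have hvbound : Iv2 ≤ 2 * Iuv + 2 * Iu2 := by
    have hmono := intervalIntegral.integral_mono_on hab.le hv2
      ((huv2.const_mul 2).add (hu2.const_mul 2))
      (fun x _ => by nlinarith [sq_nonneg (2 * u x - v x)])
    rwa [intervalIntegral.integral_add (huv2.const_mul 2) (hu2.const_mul 2),
      intervalIntegral.integral_const_mul, intervalIntegral.integral_const_mul] at hmono
  -- lower bounds for the weighted integrals
  have hκlb : κ₀ * Iu'2 ≤ ∫ x in a..b, κ x * (deriv u x) ^ 2 := by
    have := intervalIntegral.integral_mono_on hab.le (hu'2.const_mul κ₀) hκint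
      (fun x hx => mul_le_mul_of_nonneg_right (hκ x hx) (sq_nonneg _))
    rwa [intervalIntegral.integral_const_mul] at this
  have hσlb : σ₀ * Iv'2 ≤ ∫ x in a..b, σ x * (deriv v x) ^ 2 := by
    have := intervalIntegral.integral_mono_on hab.le (hv'2.const_mul σ₀) hσint
      (fun x hx => mul_le_mul_of_nonneg_right (hσ x hx) (sq_nonneg _))
    rwa [intervalIntegral.integral_const_mul] at this
  have hglb : g₀ * Iuv ≤ ∫ x in a..b, g x * (u x - v x) ^ 2 := by
    have := intervalIntegral.integral_mono_on hab.le (huv2.const_mul g₀) hgint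
      (fun x hx => mul_le_mul_of_nonneg_right (hg x hx) (sq_nonneg _))
    rwa [intervalIntegral.integral_const_mul] at this
  -- split the energy integrals
  have hsplitu : (∫ x in a..b, (u x) ^ 2 + (deriv u x) ^ 2) = Iu2 + Iu'2 :=
    intervalIntegral.integral_add hu2 hu'2
  have hsplitv : (∫ x in a..b, (v x) ^ 2 + (deriv v x) ^ 2) = Iv2 + Iv'2 :=
    intervalIntegral.integral_add hv2 hv'2
  rw [hsplitu, hsplitv]
  have key : c * (Iu2 + Iu'2 + (Iv2 + Iv'2)) ≤ κ₀ * Iu'2 + σ₀ * Iv'2 + g₀ * Iuv := by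
    nlinarith [mul_le_mul_of_nonneg_left hpoin hc0,
      mul_le_mul_of_nonneg_left hvbound hc0,
      mul_le_mul_of_nonneg_right hc1 hIu'_nn,
      mul_le_mul_of_nonneg_right hc2 hIv'_nn,
      mul_le_mul_of_nonneg_right hc3 hIuv_nn]
  linarith [hκlb, hσlb, hglb]
end
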